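/- Let H ⊂ H₊ be Hilbert spaces (H₊ = H_{1/2} densely and continuously embedded), T a nonnegative self-adjoint operator on H, Q : H₊ → Y bounded, and for h > 0 fixed suppose P_h = h²T − ihQ*Q − 1 : H₊ → H₋ (the dual space) is invertible. Then there exists C > 0, independent of h, such that ‖P_h^{-1}‖_{H → H^h_{1/2}} ≤ C(1 + ‖P_h^{-1}‖_{H → H}), where ‖u‖²_{H^h_{1/2}} = ‖u‖² + ‖h T^{1/2} u‖². -/

import Mathlib

open ContinuousLinearMap

section
variable {H Y : Type*} [NormedAddCommGroup H] [InnerProductSpace ℂ H] [CompleteSpace H]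
  [NormedAddCommGroup Y] [InnerProductSpace ℂ Y] [CompleteSpace Y]

/-- The damping term `ih‖Qv‖²` of `⟪v, P_h v⟫` is purely imaginary. -/
theorem re_inner_semiclassical_op {S : H →L[ℂ] H} (hS : IsSelfAdjoint S) (Q : H →L[ℂ] Y)
    (h : ℝ) (v : H) :
    (inner ℂ v ((h ^ 2 : ℂ) • S (S v) - v - (Complex.I * (h : ℂ)) • adjoint Q (Q v))).re =
      ‖h • S v‖ ^ 2 - ‖v‖ ^ 2 := by
  have hSS : inner ℂ v (S (S v)) = ((‖S v‖ ^ 2 : ℝ) : ℂ) := by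
    rw [← adjoint_inner_left, hS.adjoint_eq, inner_self_eq_norm_sq_to_K]
    norm_cast
  have hQQ : inner ℂ v (adjoint Q (Q v)) = ((‖Q v‖ ^ 2 : ℝ) : ℂ) := by
    rw [adjoint_inner_right, inner_self_eq_norm_sq_to_K]
    norm_cast
  have hvv : inner ℂ v v = ((‖v‖ ^ 2 : ℝ) : ℂ) := by
    rw [inner_self_eq_norm_sq_to_K]
    norm_cast
  rw [norm_smul, mul_pow, Real.norm_eq_abs, sq_abs]
  simp only [inner_sub_right, inner_smul_right, hSS, hQQ, hvv, ← Complex.ofReal_pow,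
    Complex.sub_re, Complex.mul_re, Complex.mul_im, Complex.I_re, Complex.I_im,
    Complex.ofReal_re, Complex.ofReal_im]
  ring

theorem norm_sq_add_norm_smul_sq_le {S : H →L[ℂ] H} (hS : IsSelfAdjoint S) (Q : H →L[ℂ] Y)
    (h : ℝ) (v : H) :
    ‖v‖ ^ 2 + ‖h • S v‖ ^ 2 ≤ 2 * ‖v‖ ^ 2 +
      ‖v‖ * ‖(h ^ 2 : ℂ) • S (S v) - v - (Complex.I * (h : ℂ)) • adjoint Q (Q v)‖ := by
  have hre := re_inner_semiclassical_op hS Q h v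
  have hcs := (Complex.re_le_norm _).trans (norm_inner_le_norm (𝕜 := ℂ) v
    ((h ^ 2 : ℂ) • S (S v) - v - (Complex.I * (h : ℂ)) • adjoint Q (Q v)))
  linarith

end

/-- Operator norm estimate. With `T = S²` for a self-adjoint `S` (so `T` is
nonnegative self-adjoint), `Q` bounded, and `P_h = h²T − 1 − ihQ*Q`; if `P_h` is invertible
with inverse `R = P_h⁻¹`, then `‖P_h⁻¹ f‖_{H^h_{1/2}} ≤ C (1 + ‖P_h⁻¹‖_{H→H}) ‖f‖` with `C`
independent of `h`, where `‖u‖²_{H^h_{1/2}} = ‖u‖² + ‖h T^{1/2} u‖²`. -/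
theorem stmt10 {H Y : Type*} [NormedAddCommGroup H] [InnerProductSpace ℂ H] [CompleteSpace H]
    [NormedAddCommGroup Y] [InnerProductSpace ℂ Y] [CompleteSpace Y]
    (S : H →L[ℂ] H) (hS : IsSelfAdjoint S) (Q : H →L[ℂ] Y) :
    ∃ C > (0 : ℝ), ∀ h : ℝ, 0 < h → ∀ R : H →L[ℂ] H,
      (∀ u : H,
        (h ^ 2 : ℂ) • S (S (R u)) - R u - (Complex.I * (h : ℂ)) • adjoint Q (Q (R u)) = u) →
      (∀ u : H,
        R ((h ^ 2 : ℂ) • S (S u) - u - (Complex.I * (h : ℂ)) • adjoint Q (Q u)) = u) →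
      ∀ f : H,
        Real.sqrt (‖R f‖ ^ 2 + ‖h • S (R f)‖ ^ 2) ≤ C * (1 + ‖R‖) * ‖f‖ := by
  refine ⟨2, two_pos, fun h _ R hR _ f => ?_⟩
  have henergy := norm_sq_add_norm_smul_sq_le hS Q h (R f)
  rw [hR f] at henergy
  have hRf : ‖R f‖ ≤ ‖R‖ * ‖f‖ := R.le_opNorm f
  rw [Real.sqrt_le_iff]
  refine ⟨by positivity, henergy.trans ?_⟩
  nlinarith [norm_nonneg (R f), norm_nonneg f, norm_nonneg R,
    mul_nonneg (norm_nonneg R) (norm_nonneg f)]
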